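/- arXiv:2410.09156 — 4 statements merged into one kernel-verified Lean document; each statement's English description precedes it below -/
import Mathlib

section
/- Let $f : \mathcal{Y} \to \mathbb{R}$ satisfy $|f(y)| \leq 1$ for all $y$, and let $p_1, \dots, p_n$ be probability densities on $\mathcal{Y}$ with $\sum_{j'=1}^n p_{j'}(y) \geq c n$ for some $c > 0$ and all $y \in \mathcal{Y}$. If $y_{j,l}$ for $j \in [n]$, $l \in [m]$ are independent with $y_{j,l}$ distributed according to $p_j$, then the variance of the balance-heuristic MIS estimator $\hat{g} = \sum_{j=1}^n \frac{1}{m}\sum_{l=1}^m \frac{f(y_{j,l})}{\sum_{j'=1}^n p_{j'}(y_{j,l})}$ satisfies $\mathrm{Var}[\hat{g}] \leq \frac{\mu(\mathcal{Y})}{c\, m\, n}$, where $\mu(\mathcal{Y})$ is the measure of $\mathcal{Y}$. -/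
open MeasureTheory ProbabilityTheory Finset

theorem stmt_2 {d n m : ℕ} (hn : 0 < n) (hm : 0 < m)
    {Ω : Type*} [MeasureSpace Ω] [IsProbabilityMeasure (ℙ : Measure Ω)]
    (Y : Set (EuclideanSpace ℝ (Fin d))) (hY : MeasurableSet Y)
    (hYfin : MeasureTheory.volume Y < ⊤)
    -- the probability densities `p j` on `Y` (w.r.t. Lebesgue measure)
    (p : Fin n → EuclideanSpace ℝ (Fin d) → ℝ)
    (hp_meas : ∀ j, Measurable (p j))
    (hp_nonneg : ∀ j z, 0 ≤ p j z)
    (hp_density : ∀ j, ∫ z in Y, p j z = 1)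
    -- the sum of the densities is at least `c * n` on `Y`
    (c : ℝ) (hc : 0 < c) (hp_sum : ∀ z ∈ Y, (c : ℝ) * n ≤ ∑ j', p j' z)
    -- the function `f`, bounded by one
    (f : EuclideanSpace ℝ (Fin d) → ℝ) (hf_meas : Measurable f)
    (hf_bdd : ∀ z ∈ Y, |f z| ≤ 1)
    -- the independent samples `y (j, l)`, with `y (j, l)` having density `p j` on `Y`
    (y : Fin n × Fin m → Ω → EuclideanSpace ℝ (Fin d))
    (hy_meas : ∀ jl, Measurable (y jl))
    (hy_indep : iIndepFun y ℙ)
    (hy_law : ∀ jl : Fin n × Fin m, Measure.map (y jl) ℙ =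
      (MeasureTheory.volume.restrict Y).withDensity fun z => ENNReal.ofReal (p jl.1 z))
    -- the balance-heuristic MIS estimator
    (ghat : Ω → ℝ)
    (hghat : ghat = fun a =>
      ∑ j, (1 / m : ℝ) * ∑ l, f (y (j, l) a) / ∑ j', p j' (y (j, l) a)) :
    variance ghat ℙ ≤ (MeasureTheory.volume Y).toReal / (c * m * n) := by
  have hcn : (0:ℝ) < c * n := by positivity
  set S : EuclideanSpace ℝ (Fin d) → ℝ := fun z => ∑ j', p j' z with hS_def
  set g : EuclideanSpace ℝ (Fin d) → ℝ := fun z => f z / S z with hg_def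
  have hS_meas : Measurable S := Finset.measurable_sum _ fun j _ => hp_meas j
  have hg_meas : Measurable g := hf_meas.div hS_meas
  have hS_pos : ∀ z ∈ Y, 0 < S z := fun z hz => lt_of_lt_of_le hcn (hp_sum z hz)
  have hg_bdd : ∀ z ∈ Y, |g z| ≤ 1 / (c * n) := by
    intro z hz
    rw [hg_def, abs_div, abs_of_pos (hS_pos z hz)]
    calc |f z| / S z ≤ 1 / S z :=
          div_le_div₀ zero_le_one (hf_bdd z hz) (hS_pos z hz) le_rfl
      _ ≤ 1 / (c * n) := one_div_le_one_div_of_le hcn (hp_sum z hz)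
  set X : Fin n × Fin m → Ω → ℝ := fun jl a => g (y jl a) with hX_def
  have hX_meas : ∀ jl, Measurable (X jl) := fun jl => hg_meas.comp (hy_meas jl)
  -- samples land in Y almost surely
  have haeY : ∀ jl, ∀ᵐ a ∂ℙ, y jl a ∈ Y := by
    intro jl
    have h0 : Measure.map (y jl) ℙ Yᶜ = 0 := by
      rw [hy_law, withDensity_apply _ hY.compl, Measure.restrict_restrict hY.compl,
        Set.compl_inter_self, Measure.restrict_empty, lintegral_zero_measure]
    rw [Measure.map_apply (hy_meas jl) hY.compl] at h0
    exact (ae_iff).2 h0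
  have hX_bdd : ∀ jl, ∀ᵐ a ∂ℙ, ‖X jl a‖ ≤ 1 / (c * n) := fun jl =>
    (haeY jl).mono fun a ha => by simpa [Real.norm_eq_abs] using hg_bdd _ ha
  have hX_mem : ∀ jl, MemLp (X jl) 2 ℙ := fun jl =>
    MemLp.of_bound (hX_meas jl).aestronglyMeasurable _ (hX_bdd jl)
  -- rewrite ghat as sum of scaled independent variables
  have hg_eq : ghat = ∑ jl : Fin n × Fin m, (1 / (m:ℝ)) • X jl := by
    funext a
    rw [hghat]
    simp only [Finset.sum_apply, Pi.smul_apply, smul_eq_mul]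
    rw [Fintype.sum_prod_type]
    exact Finset.sum_congr rfl fun j _ => Finset.mul_sum _ _ _
  -- the second moments
  set E : Fin n → ℝ := fun j => ∫ z in Y, p j z * g z ^ 2 with hE_def
  have hmom : ∀ jl : Fin n × Fin m, ∫ a, X jl a ^ 2 ∂ℙ = E jl.1 := by
    intro jl
    have h1 : ∫ a, X jl a ^ 2 ∂ℙ = ∫ z, g z ^ 2 ∂(Measure.map (y jl) ℙ) := by
      rw [integral_map (hy_meas jl).aemeasurable
        ((hg_meas.pow_const 2).aestronglyMeasurable)]
    rw [h1, hy_law]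
    rw [show (fun z => ENNReal.ofReal (p jl.1 z)) =
        (fun z => ((p jl.1 z).toNNReal : ENNReal)) from rfl,
      integral_withDensity_eq_integral_smul (hp_meas jl.1).real_toNNReal]
    simp only [NNReal.smul_def, smul_eq_mul, Real.coe_toNNReal _ (hp_nonneg jl.1 _)]
    rfl
  -- variance of the sum
  have hvar : variance ghat ℙ = ∑ jl : Fin n × Fin m, (1/(m:ℝ))^2 * variance (X jl) ℙ := by
    rw [hg_eq, IndepFun.variance_sum (fun jl _ => (hX_mem jl).const_smul _)
      (fun i _ j _ hij => ((hy_indep.comp (fun _ => fun z => (1/(m:ℝ)) • g z)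
        (fun _ => by exact hg_meas.const_smul (1/(m:ℝ)))).indepFun hij))]
    exact Finset.sum_congr rfl fun jl _ => variance_smul _ _ _
  -- each variance is at most the second moment
  have hvarle : ∀ jl : Fin n × Fin m, variance (X jl) ℙ ≤ E jl.1 := by
    intro jl
    refine le_trans ?_ (le_of_eq (hmom jl))
    exact variance_le_expectation_sq (hX_meas jl).aestronglyMeasurable
  -- integrability facts
  have hIntp : ∀ j, IntegrableOn (p j) Y volume := by
    intro j
    by_contra h
    exact one_ne_zero ((hp_density j).symm.trans (integral_undef h))
  have hIntpS : ∀ j, IntegrableOn (fun z => p j z / S z) Y volume := by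
    intro j
    refine Integrable.mono' ((hIntp j).const_mul (1/(c*n)))
      ((hp_meas j).div hS_meas).aestronglyMeasurable ?_
    refine (ae_restrict_iff' hY).2 (Filter.Eventually.of_forall fun z hz => ?_)
    rw [Real.norm_eq_abs, abs_div, abs_of_nonneg (hp_nonneg j z), abs_of_pos (hS_pos z hz)]
    rw [div_le_iff₀ (hS_pos z hz)]
    calc p j z = (1/(c*n)) * p j z * (c*n) := by field_simp
      _ ≤ (1/(c*n)) * p j z * S z := by
          gcongr
          · exact mul_nonneg (by positivity) (hp_nonneg j z)
          · exact hp_sum z hz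
  -- bound the sum of second moments
  have hpt : ∀ j, ∀ z ∈ Y, p j z * g z ^ 2 ≤ (1/(c*n)) * (p j z / S z) := by
    intro j z hz
    have h1 : |g z| ≤ 1 / S z := by
      rw [hg_def, abs_div, abs_of_pos (hS_pos z hz)]
      exact div_le_div₀ zero_le_one (hf_bdd z hz) (hS_pos z hz) le_rfl
    have h2 : g z ^ 2 ≤ (1/(c*n)) * (1 / S z) := by
      calc g z ^ 2 = |g z| * |g z| := by rw [abs_mul_abs_self, sq]
        _ ≤ (1/(c*n)) * (1 / S z) :=
            mul_le_mul (hg_bdd z hz) h1 (abs_nonneg _) (by positivity)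
    calc p j z * g z ^ 2 ≤ p j z * ((1/(c*n)) * (1 / S z)) :=
          mul_le_mul_of_nonneg_left h2 (hp_nonneg j z)
      _ = (1/(c*n)) * (p j z / S z) := by ring
  have hEle : ∀ j, E j ≤ (1/(c*n)) * ∫ z in Y, p j z / S z := by
    intro j
    rw [← integral_const_mul]
    refine setIntegral_mono_on ?_ ((hIntpS j).const_mul _) hY (fun z hz => hpt j z hz)
    refine Integrable.mono' ((hIntpS j).const_mul (1/(c*n)))
      ((hp_meas j).mul (hg_meas.pow_const 2)).aestronglyMeasurable ?_
    refine (ae_restrict_iff' hY).2 (Filter.Eventually.of_forall fun z hz => ?_)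
    rw [Real.norm_eq_abs, abs_mul, abs_of_nonneg (hp_nonneg j z), abs_pow, sq_abs]
    exact hpt j z hz
  have hsumint : ∑ j, ∫ z in Y, p j z / S z = (volume Y).toReal := by
    rw [← integral_finset_sum _ (fun j _ => hIntpS j)]
    rw [setIntegral_congr_fun hY (g := fun _ => (1:ℝ)) (fun z hz => by
      rw [← Finset.sum_div, hS_def, div_self (hS_pos z hz).ne'])]
    simp [setIntegral_const, Measure.real]
  have hEsum : ∑ j, E j ≤ (1/(c*n)) * (volume Y).toReal := by
    calc ∑ j, E j ≤ ∑ j, (1/(c*n)) * ∫ z in Y, p j z / S z :=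
          Finset.sum_le_sum fun j _ => hEle j
      _ = (1/(c*n)) * ∑ j, ∫ z in Y, p j z / S z := by rw [Finset.mul_sum]
      _ = (1/(c*n)) * (volume Y).toReal := by rw [hsumint]
  -- put everything together
  rw [hvar]
  calc ∑ jl : Fin n × Fin m, (1/(m:ℝ))^2 * variance (X jl) ℙ
      ≤ ∑ jl : Fin n × Fin m, (1/(m:ℝ))^2 * E jl.1 := by
        refine Finset.sum_le_sum fun jl _ => ?_
        exact mul_le_mul_of_nonneg_left (hvarle jl) (by positivity)
    _ = (1/(m:ℝ))^2 * (m * ∑ j, E j) := by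
        rw [← Finset.mul_sum, Fintype.sum_prod_type]
        simp only [Finset.sum_const, Finset.card_univ, Fintype.card_fin, nsmul_eq_mul,
          Finset.mul_sum]
    _ ≤ (1/(m:ℝ))^2 * (m * ((1/(c*n)) * (volume Y).toReal)) := by
        have hm' : (0:ℝ) < m := by exact_mod_cast hm
        gcongr
    _ = (volume Y).toReal / (c * m * n) := by
        have hm' : (0:ℝ) < m := by exact_mod_cast hm
        have hn' : (0:ℝ) < n := by exact_mod_cast hn
        field_simp
end

section
/- Let $E : [n] \times [n] \to \mathbb{R}$, $\tau > 0$, and let $\zeta_* \in \mathbb{R}^n$ be a critical point of $\Phi(\zeta) = \frac{1}{n}\sum_{i=1}^n \tau \log\left(\sum_{j=1}^n \exp((E(i,j) - \zeta_j)/\tau)\right) + \frac{1}{n}\sum_{j=1}^n \zeta_j$ (i.e., $\nabla \Phi(\zeta_*) = 0$). Then the vector $\bar{q}$ with $\bar{q}_j = \exp(\zeta_{*,j}/\tau)$ satisfies the fixed-point equation $\bar{q}_j = \sum_{j'=1}^n \frac{\exp(E(j',j)/\tau)}{\sum_{i'=1}^n \bar{q}_{i'}^{-1} \exp(E(j',i')/\tau)}$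 for every $j \in [n]$. -/
open Finset

/-- The objective `Φ` (version without the constant `E i i` shift). -/
noncomputable def Phi {n : ℕ} (τ : ℝ) (E : Fin n → Fin n → ℝ) (ζ : Fin n → ℝ) : ℝ :=
  (1 / n) * ∑ i, τ * Real.log (∑ j, Real.exp ((E i j - ζ j) / τ)) +
    (1 / n) * ∑ j, ζ j

theorem stmt_6 {n : ℕ} (τ : ℝ) (hτ : 0 < τ) (E : Fin n → Fin n → ℝ)
    (ζs : Fin n → ℝ) (hcrit : fderiv ℝ (Phi τ E) ζs = 0) :
    ∀ j, Real.exp (ζs j / τ) =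
      ∑ j', Real.exp (E j' j / τ) /
        ∑ i', (Real.exp (ζs i' / τ))⁻¹ * Real.exp (E j' i' / τ) := by
  intro j
  have hn : 0 < n := Fin.pos j
  set s : Fin n → ℝ := fun i => ∑ j', Real.exp ((E i j' - ζs j') / τ) with hs
  have hspos : ∀ i, 0 < s i := by
    intro i
    exact Finset.sum_pos (fun _ _ => Real.exp_pos _) ⟨j, mem_univ j⟩
  have hsum : ∀ i : Fin n, HasFDerivAt (fun ζ : Fin n → ℝ => ∑ j', Real.exp ((E i j' - ζ j') / τ))
      (∑ j', Real.exp ((E i j' - ζs j') / τ) •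
        (τ⁻¹ • (-(ContinuousLinearMap.proj j' : (Fin n → ℝ) →L[ℝ] ℝ)))) ζs := by
    intro i
    apply HasFDerivAt.fun_sum
    intro j' _
    have hproj : HasFDerivAt (fun ζ : Fin n → ℝ => ζ j')
        ((ContinuousLinearMap.proj j' : (Fin n → ℝ) →L[ℝ] ℝ)) ζs :=
      (ContinuousLinearMap.proj (R := ℝ) (φ := fun _ : Fin n => ℝ) j').hasFDerivAt
    have h1 : HasFDerivAt (fun ζ : Fin n → ℝ => (E i j' - ζ j') / τ)
        (τ⁻¹ • (-(ContinuousLinearMap.proj j' : (Fin n → ℝ) →L[ℝ] ℝ))) ζs := by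
      have := (hproj.const_sub (E i j')).const_mul τ⁻¹
      simpa [div_eq_inv_mul] using this
    exact h1.exp
  have hlin : HasFDerivAt (fun ζ : Fin n → ℝ => (1 / (n:ℝ)) * ∑ j', ζ j')
      ((1 / (n:ℝ)) • ∑ j', (ContinuousLinearMap.proj j' : (Fin n → ℝ) →L[ℝ] ℝ)) ζs := by
    exact (HasFDerivAt.fun_sum (fun j' _ =>
      (ContinuousLinearMap.proj (R := ℝ) (φ := fun _ : Fin n => ℝ) j').hasFDerivAt)).const_mul _
  have hPhi : HasFDerivAt (Phi τ E)
      ((1 / (n:ℝ)) • ∑ i, τ • ((s i)⁻¹ •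
          (∑ j', Real.exp ((E i j' - ζs j') / τ) •
            (τ⁻¹ • (-(ContinuousLinearMap.proj j' : (Fin n → ℝ) →L[ℝ] ℝ))))) +
        (1 / (n:ℝ)) • ∑ j', (ContinuousLinearMap.proj j' : (Fin n → ℝ) →L[ℝ] ℝ)) ζs := by
    apply HasFDerivAt.add _ hlin
    apply HasFDerivAt.const_mul _
    apply HasFDerivAt.fun_sum
    intro i _
    exact ((hsum i).log (ne_of_gt (hspos i))).const_mul τ
  have hD0 := hPhi.fderiv
  rw [hcrit] at hD0
  have h := congrArg (fun D : (Fin n → ℝ) →L[ℝ] ℝ => D (Pi.single j 1)) hD0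
  simp [ContinuousLinearMap.sum_apply, Pi.single_apply, Finset.sum_ite_eq'] at h

  have hτ' : τ ≠ 0 := ne_of_gt hτ
  have hn' : ((n:ℝ))⁻¹ ≠ 0 := inv_ne_zero (Nat.cast_ne_zero.mpr hn.ne')
  have hone : ∑ x, Real.exp ((E x j - ζs j) / τ) / s x = 1 := by
    have hT : ∑ x : Fin n, τ * ((s x)⁻¹ * (Real.exp ((E x j - ζs j) / τ) * τ⁻¹))
        = ∑ x, Real.exp ((E x j - ζs j) / τ) / s x := by
      apply Finset.sum_congr rfl
      intro x _
      calc τ * ((s x)⁻¹ * (Real.exp ((E x j - ζs j) / τ) * τ⁻¹))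
          = (τ * τ⁻¹) * (Real.exp ((E x j - ζs j) / τ) * (s x)⁻¹) := by ring
        _ = Real.exp ((E x j - ζs j) / τ) * (s x)⁻¹ := by
            rw [mul_inv_cancel₀ hτ', one_mul]
        _ = Real.exp ((E x j - ζs j) / τ) / s x := (div_eq_mul_inv _ _).symm
    rw [hT] at h
    have h2 : ((n:ℝ))⁻¹ * (∑ x, Real.exp ((E x j - ζs j) / τ) / s x) = ((n:ℝ))⁻¹ * 1 := by
      rw [mul_one]; linarith
    exact mul_left_cancel₀ hn' h2
  have hden : ∀ j' : Fin n, ∑ i', (Real.exp (ζs i' / τ))⁻¹ * Real.exp (E j' i' / τ) = s j' := by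
    intro j'
    apply Finset.sum_congr rfl
    intro i' _
    rw [← Real.exp_neg, ← Real.exp_add]
    congr 1
    ring
  calc Real.exp (ζs j / τ)
      = Real.exp (ζs j / τ) * ∑ i, Real.exp ((E i j - ζs j) / τ) / s i := by rw [hone, mul_one]
    _ = ∑ j', Real.exp (E j' j / τ) / ∑ i', (Real.exp (ζs i' / τ))⁻¹ * Real.exp (E j' i' / τ) := by
        rw [Finset.mul_sum]
        apply Finset.sum_congr rfl
        intro j' _
        rw [hden j', mul_div_assoc', ← Real.exp_add]
        congr 2
        ring
end

section
/- Let $x_1, \dots, x_n \in \mathbb{R}^d$ with $\|x_i\|_2 \leq c$ for all $i$, and let $\epsilon_1, \dots, \epsilon_n$ be independent Rademacher random variables. Then for any $\tilde{\lambda} > 0$ satisfying $8 e \tilde{\lambda} \left(\sum_{1 \leq i < \tilde{i} \leq n} (x_i^\top x_{\tilde{i}})^2\right)^{1/2} \leq 1$, we have $\mathbb{E}\left[\exp\left(\tilde{\lambda}\left\|\sum_{i=1}^n \epsilon_i x_i\right\|_2^2\right)\right] \leq 2 \exp\left(\tilde{\lambda} \sum_{i=1}^n \|x_i\|_2^2\right)$.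 -/
open MeasureTheory ProbabilityTheory Finset
noncomputable def sg (b : Bool) : ℝ := if b then 1 else -1

noncomputable def rad : Measure ℝ :=
  (1 / 2 : ENNReal) • Measure.dirac (1 : ℝ) + (1 / 2 : ENNReal) • Measure.dirac (-1 : ℝ)

instance : IsProbabilityMeasure rad := by
  constructor
  simp [rad, Measure.add_apply, Measure.smul_apply]
  rw [ENNReal.inv_two_add_inv_two]

lemma rad_apply {s : Set ℝ} (hs : MeasurableSet s) :
    rad s = ∑ bb : Bool, (2 : ENNReal)⁻¹ * s.indicator 1 (sg bb) := by
  simp only [rad, Measure.add_apply, Measure.smul_apply, Measure.dirac_apply' _ hs,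
    Fintype.sum_bool, sg, if_true, if_false, smul_eq_mul, one_div]
  norm_num

lemma pi_rad {n : ℕ} :
    Measure.pi (fun _ : Fin n => rad)
      = ∑ σ : Fin n → Bool, ((2 : ENNReal) ^ n)⁻¹ • Measure.dirac (fun i => sg (σ i)) := by
  refine Measure.pi_eq fun s hs => ?_
  rw [Measure.finset_sum_apply]
  calc (∑ σ : Fin n → Bool,
        (((2:ENNReal) ^ n)⁻¹ • Measure.dirac (fun i => sg (σ i))) (Set.pi Set.univ s))
      = ∑ σ : Fin n → Bool,
          ∏ i, (2:ENNReal)⁻¹ * (s i).indicator 1 (sg (σ i)) := by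
        refine Finset.sum_congr rfl fun σ _ => ?_
        rw [Measure.smul_apply, Measure.dirac_apply' _ (MeasurableSet.univ_pi hs),
          Finset.prod_mul_distrib, Finset.prod_const]
        have hind : (Set.pi Set.univ s).indicator (1 : (Fin n → ℝ) → ENNReal)
            (fun i => sg (σ i)) = ∏ i, (s i).indicator 1 (sg (σ i)) := by
          by_cases h : ∀ i, sg (σ i) ∈ s i
          · rw [Set.indicator_of_mem (by simpa [Set.mem_pi] using h)]
            rw [Pi.one_apply]
            symm
            exact Finset.prod_eq_one fun i _ => by
              rw [Set.indicator_of_mem (h i), Pi.one_apply]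
          · push_neg at h
            obtain ⟨i, hi⟩ := h
            rw [Set.indicator_of_notMem (by simp [Set.mem_pi]; exact ⟨i, hi⟩)]
            symm
            exact Finset.prod_eq_zero (Finset.mem_univ i)
              (Set.indicator_of_notMem hi _)
        rw [hind, smul_eq_mul]
        congr 1
        rw [← ENNReal.inv_pow]
        simp [Finset.card_univ]
    _ = ∏ i, rad (s i) := by
        rw [← Fintype.piFinset_univ,
          ← Finset.prod_univ_sum (fun _ : Fin n => (Finset.univ : Finset Bool))
            (fun i bb => (2:ENNReal)⁻¹ * (s i).indicator 1 (sg bb))]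
        exact (Finset.prod_congr rfl fun i _ => (rad_apply (hs i)).symm)

section Bridge
variable {n : ℕ} {Ω : Type*} [MeasureSpace Ω] [IsProbabilityMeasure (ℙ : Measure Ω)]

lemma map_eq_pi (ε : Fin n → Ω → ℝ) (hmeas : ∀ i, Measurable (ε i))
    (hindep : iIndepFun ε ℙ)
    (hlaw : ∀ i, Measure.map (ε i) ℙ = rad) :
    Measure.map (fun ω i => ε i ω) ℙ = Measure.pi (fun _ : Fin n => rad) := by
  have hvec : Measurable (fun ω i => ε i ω) := measurable_pi_lambda _ hmeas
  refine (Measure.pi_eq fun s hs => ?_).symm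
  rw [Measure.map_apply hvec (MeasurableSet.univ_pi hs)]
  have hpre : (fun ω i => ε i ω) ⁻¹' (Set.pi Set.univ s)
      = ⋂ i ∈ (Finset.univ : Finset (Fin n)), ε i ⁻¹' s i := by
    ext ω; simp [Set.mem_pi]
  rw [hpre, hindep.measure_inter_preimage_eq_mul Finset.univ (fun i _ => hs i)]
  exact Finset.prod_congr rfl fun i _ => by
    rw [← hlaw i, Measure.map_apply (hmeas i) (hs i)]

lemma integral_eq_sum (ε : Fin n → Ω → ℝ) (hmeas : ∀ i, Measurable (ε i))
    (hindep : iIndepFun ε ℙ)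
    (hlaw : ∀ i, Measure.map (ε i) ℙ = rad)
    (F : (Fin n → ℝ) → ℝ) (hF : Continuous F) :
    ∫ ω, F (fun i => ε i ω) ∂ℙ
      = ∑ σ : Fin n → Bool, ((2:ℝ) ^ n)⁻¹ * F (fun i => sg (σ i)) := by
  have hvec : Measurable (fun ω i => ε i ω) := measurable_pi_lambda _ hmeas
  have h1 : ∫ ω, F (fun i => ε i ω) ∂ℙ = ∫ y, F y ∂(Measure.map (fun ω i => ε i ω) ℙ) := by
    rw [integral_map hvec.aemeasurable hF.aestronglyMeasurable]
  rw [h1, map_eq_pi ε hmeas hindep hlaw, pi_rad]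
  have hint : ∀ σ : Fin n → Bool,
      Integrable F (((2:ENNReal) ^ n)⁻¹ • Measure.dirac (fun i => sg (σ i))) := by
    intro σ
    refine Integrable.smul_measure ?_ (by simp)
    refine ⟨hF.aestronglyMeasurable, ?_⟩
    rw [HasFiniteIntegral, lintegral_dirac' _ (by fun_prop)]
    exact ENNReal.coe_lt_top
  rw [integral_finset_sum_measure (fun σ _ => hint σ)]
  refine Finset.sum_congr rfl fun σ _ => ?_
  rw [integral_smul_measure, integral_dirac]
  simp [ENNReal.toReal_inv, smul_eq_mul]
end Bridge

lemma sum_split' {k : ℕ} (f : Fin k → Fin k → ℝ) :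
    ∑ i, ∑ j, f i j = (∑ i, f i i) + ∑ i, ∑ j ∈ Finset.Ioi i, (f i j + f j i) := by
  induction k with
  | zero => simp
  | succ k ih =>
    simp only [Fin.sum_univ_succ, Fin.sum_Ioi_zero, Fin.sum_Ioi_succ,
      Finset.sum_add_distrib]
    have := ih (fun i j => f i.succ j.succ)
    simp only [Finset.sum_add_distrib] at this
    linarith [this]

lemma sg_sq' (b : Bool) : sg b ^ 2 = 1 := by cases b <;> simp [sg]

lemma norm_expand {n d : ℕ} (x : Fin n → EuclideanSpace ℝ (Fin d)) (y : Fin n → ℝ)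
    (hy : ∀ i, y i ^ 2 = 1) :
    ‖∑ i, y i • x i‖ ^ 2 = (∑ i, ‖x i‖ ^ 2)
      + ∑ i, ∑ j ∈ Finset.Ioi i, y i * y j * (2 * (inner ℝ (x i) (x j) : ℝ)) := by
  have h0 : ‖∑ i, y i • x i‖ ^ 2
      = ∑ i, ∑ j, (y i * y j) * (inner ℝ (x i) (x j) : ℝ) := by
    rw [← real_inner_self_eq_norm_sq]
    rw [sum_inner]
    refine Finset.sum_congr rfl fun i _ => ?_
    rw [inner_sum]
    refine Finset.sum_congr rfl fun j _ => ?_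
    rw [real_inner_smul_left, real_inner_smul_right]
    ring
  rw [h0, sum_split' (fun i j => (y i * y j) * (inner ℝ (x i) (x j) : ℝ))]
  congr 1
  · refine Finset.sum_congr rfl fun i _ => ?_
    rw [real_inner_self_eq_norm_sq, ← sq]
    rw [hy i, one_mul]
  · refine Finset.sum_congr rfl fun i _ => Finset.sum_congr rfl fun j _ => ?_
    rw [real_inner_comm (x j) (x i)]
    ring

lemma chaos_bound (k : ℕ) : ∀ (b : Fin k → Fin k → ℝ),
    (∀ i j, b i j = b j i) → (∀ i, b i i = 0) →
    (∑ i, ∑ j, b i j ^ 2 ≤ 4 / 25) →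
    ∑ σ : Fin k → Bool, Real.exp (∑ i, ∑ j ∈ Finset.Ioi i, sg (σ i) * sg (σ j) * b i j)
      ≤ 2 ^ k * Real.exp (2⁻¹ * ∑ i, ∑ j, b i j ^ 2) := by
  induction k with
  | zero =>
    intro b _ _ _
    have : (0:ℝ) ≤ 2⁻¹ * ∑ i, ∑ j, b i j ^ 2 := by positivity
    simpa using Real.one_le_exp this
  | succ k ih =>
    intro b hsym hd hsmall
    set m : Fin k → ℝ := fun i => b 0 i.succ with hm
    set B : Fin k → Fin k → ℝ := fun i j => b i.succ j.succ with hB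
    set c : Fin k → Fin k → ℝ := fun i j => if i = j then 0 else m i * m j with hc
    set b' : Fin k → Fin k → ℝ := fun i j => B i j + c i j with hb'
    set x2 : ℝ := ∑ i, ∑ j, B i j ^ 2 with hx2
    set y : ℝ := ∑ i, m i ^ 2 with hy
    set S : ℝ := ∑ i, ∑ j, B i j * c i j with hSdef
    set C : ℝ := ∑ i, ∑ j, c i j ^ 2 with hCdef
    -- Frobenius decomposition
    have hF : ∑ i, ∑ j, b i j ^ 2 = x2 + 2 * y := by
      simp only [Fin.sum_univ_succ, hd, hsym _ 0]
      ring_nf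
      simp only [Finset.sum_add_distrib]
      ring
    have hy0 : 0 ≤ y := Finset.sum_nonneg fun i _ => sq_nonneg _
    have hx20 : 0 ≤ x2 :=
      Finset.sum_nonneg fun i _ => Finset.sum_nonneg fun j _ => sq_nonneg _
    have hC0 : 0 ≤ C :=
      Finset.sum_nonneg fun i _ => Finset.sum_nonneg fun j _ => sq_nonneg _
    have hsmall' := hsmall
    rw [hF] at hsmall'
    have hx2le : x2 ≤ 4 / 25 := by linarith
    have hyle : y ≤ 2 / 25 := by linarith
    -- Cauchy–Schwarz on double sums
    have hCS : S ^ 2 ≤ x2 * C := by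
      have h1 : S = ∑ p : Fin k × Fin k, B p.1 p.2 * c p.1 p.2 := by
        rw [Fintype.sum_prod_type]
      have h2 : x2 = ∑ p : Fin k × Fin k, B p.1 p.2 ^ 2 := by
        rw [Fintype.sum_prod_type]
      have h3 : C = ∑ p : Fin k × Fin k, c p.1 p.2 ^ 2 := by
        rw [Fintype.sum_prod_type]
      rw [h1, h2, h3]
      exact Finset.sum_mul_sq_le_sq_mul_sq _ _ _
    have hCy : C ≤ y ^ 2 := by
      have : ∀ i j : Fin k, c i j ^ 2 ≤ m i ^ 2 * m j ^ 2 := by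
        intro i j
        by_cases h : i = j <;> simp [hc, h, mul_pow] <;> positivity
      calc C ≤ ∑ i, ∑ j, m i ^ 2 * m j ^ 2 :=
            Finset.sum_le_sum fun i _ => Finset.sum_le_sum fun j _ => this i j
        _ = y ^ 2 := by rw [hy]; rw [← Finset.sum_mul_sum]; ring
    have hSle : S ≤ 2 / 5 * y := by
      nlinarith [hCS, hCy, hx2le, hy0, hC0, sq_nonneg (S + 2/5*y), sq_nonneg (S - 2/5*y)]
    have hT : ∑ i, ∑ j, b' i j ^ 2 = x2 + 2 * S + C := by
      have hpt : ∀ i j : Fin k, b' i j ^ 2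
          = B i j ^ 2 + 2 * (B i j * c i j) + c i j ^ 2 := by
        intro i j; simp only [hb']; ring
      simp only [hpt, Finset.sum_add_distrib, ← Finset.mul_sum]
      rfl
    have hTle : ∑ i, ∑ j, b' i j ^ 2 ≤ x2 + y := by
      rw [hT]; nlinarith
    have hT25 : ∑ i, ∑ j, b' i j ^ 2 ≤ 4 / 25 := by linarith
    -- symmetry and diagonal of b'
    have hsym' : ∀ i j, b' i j = b' j i := by
      intro i j
      by_cases h : i = j
      · rw [h]
      · simp only [hb', hB, hc, if_neg h, if_neg (Ne.symm h), hsym i.succ j.succ]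
        ring
    have hd' : ∀ i, b' i i = 0 := by
      intro i; simp [hb', hB, hc, hd]
    have hIH := ih b' hsym' hd' hT25
    -- reindex the sum over sign vectors
    have hre : ∑ σ : Fin (k+1) → Bool,
        Real.exp (∑ i, ∑ j ∈ Finset.Ioi i, sg (σ i) * sg (σ j) * b i j)
        = ∑ τ : Fin k → Bool, ∑ s : Bool,
          Real.exp (∑ i, ∑ j ∈ Finset.Ioi i,
            sg ((Fin.cons s τ : Fin (k+1) → Bool) i) * sg ((Fin.cons s τ : Fin (k+1) → Bool) j) * b i j) := by
      have hEq := Fintype.sum_equiv (Fin.consEquiv fun _ : Fin (k+1) => Bool)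
        (fun p : Bool × (Fin k → Bool) => Real.exp (∑ i, ∑ j ∈ Finset.Ioi i,
          sg ((Fin.cons p.1 p.2 : Fin (k+1) → Bool) i) * sg ((Fin.cons p.1 p.2 : Fin (k+1) → Bool) j) * b i j))
        (fun σ : Fin (k+1) → Bool => Real.exp (∑ i, ∑ j ∈ Finset.Ioi i,
          sg (σ i) * sg (σ j) * b i j))
        (fun p => rfl)
      rw [← hEq, Fintype.sum_prod_type, Finset.sum_comm]
    -- exponent decomposition
    have hexp : ∀ (s : Bool) (τ : Fin k → Bool),
        (∑ i, ∑ j ∈ Finset.Ioi i, sg ((Fin.cons s τ : Fin (k+1) → Bool) i) * sg ((Fin.cons s τ : Fin (k+1) → Bool) j) * b i j)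
          = sg s * (∑ i, sg (τ i) * m i)
            + ∑ i, ∑ j ∈ Finset.Ioi i, sg (τ i) * sg (τ j) * B i j := by
      intro s τ
      rw [Fin.sum_univ_succ]
      simp only [Fin.cons_zero, Fin.cons_succ, Fin.sum_Ioi_zero, Fin.sum_Ioi_succ]
      rw [Finset.mul_sum]
      congr 1
      · exact Finset.sum_congr rfl fun j _ => by simp only [hm]; ring
    -- pointwise bound for each τ
    have hptb : ∀ τ : Fin k → Bool,
        (∑ s : Bool, Real.exp (∑ i, ∑ j ∈ Finset.Ioi i,
            sg ((Fin.cons s τ : Fin (k+1) → Bool) i) * sg ((Fin.cons s τ : Fin (k+1) → Bool) j) * b i j))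
        ≤ 2 * Real.exp (2⁻¹ * y +
            ∑ i, ∑ j ∈ Finset.Ioi i, sg (τ i) * sg (τ j) * b' i j) := by
      intro τ
      set L : ℝ := ∑ i, sg (τ i) * m i with hL
      set Q : ℝ := ∑ i, ∑ j ∈ Finset.Ioi i, sg (τ i) * sg (τ j) * B i j with hQ
      have h1 : (∑ s : Bool, Real.exp (∑ i, ∑ j ∈ Finset.Ioi i,
          sg ((Fin.cons s τ : Fin (k+1) → Bool) i) * sg ((Fin.cons s τ : Fin (k+1) → Bool) j) * b i j))
          = (Real.exp L + Real.exp (-L)) * Real.exp Q := by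
        rw [Fintype.sum_bool, hexp true τ, hexp false τ]
        have ht : sg true = 1 := by simp [sg]
        have hf : sg false = -1 := by simp [sg]
        rw [ht, hf, one_mul, neg_one_mul, Real.exp_add, Real.exp_add]
        ring
      have h2 : (Real.exp L + Real.exp (-L)) * Real.exp Q
          ≤ 2 * Real.exp (L ^ 2 / 2) * Real.exp Q := by
        have := Real.cosh_le_exp_half_sq L
        rw [Real.cosh_eq] at this
        have h3 : Real.exp L + Real.exp (-L) ≤ 2 * Real.exp (L ^ 2 / 2) := by linarith
        exact mul_le_mul_of_nonneg_right h3 (Real.exp_pos Q).le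
      have hL2 : L ^ 2 = y + ∑ i, ∑ j ∈ Finset.Ioi i,
          2 * (sg (τ i) * sg (τ j) * (m i * m j)) := by
        have : L ^ 2 = ∑ i, ∑ j, (sg (τ i) * m i) * (sg (τ j) * m j) := by
          rw [sq, hL, Finset.sum_mul_sum]
        rw [this, sum_split' (fun i j => (sg (τ i) * m i) * (sg (τ j) * m j))]
        congr 1
        · rw [hy]
          exact Finset.sum_congr rfl fun i _ => by
            rw [← sq, mul_pow, sg_sq', one_mul]
        · exact Finset.sum_congr rfl fun i _ => Finset.sum_congr rfl fun j _ => by ring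
      have hQR : L ^ 2 / 2 + Q = 2⁻¹ * y +
          ∑ i, ∑ j ∈ Finset.Ioi i, sg (τ i) * sg (τ j) * b' i j := by
        have hRsplit : (∑ i, ∑ j ∈ Finset.Ioi i, sg (τ i) * sg (τ j) * b' i j)
            = (∑ i, ∑ j ∈ Finset.Ioi i, sg (τ i) * sg (τ j) * (m i * m j)) + Q := by
          rw [hQ, ← Finset.sum_add_distrib]
          refine Finset.sum_congr rfl fun i _ => ?_
          rw [← Finset.sum_add_distrib]
          refine Finset.sum_congr rfl fun j hj => ?_
          have hij : i ≠ j := ne_of_lt (Finset.mem_Ioi.mp hj)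
          simp only [hb', hc, if_neg hij]
          ring
        have h4 : (∑ i, ∑ j ∈ Finset.Ioi i, 2 * (sg (τ i) * sg (τ j) * (m i * m j)))
            = 2 * ∑ i, ∑ j ∈ Finset.Ioi i, sg (τ i) * sg (τ j) * (m i * m j) := by
          rw [Finset.mul_sum]
          exact Finset.sum_congr rfl fun i _ => (Finset.mul_sum _ _ _).symm
        rw [hRsplit, hL2, h4]
        ring
      calc (∑ s : Bool, Real.exp (∑ i, ∑ j ∈ Finset.Ioi i,
              sg ((Fin.cons s τ : Fin (k+1) → Bool) i) * sg ((Fin.cons s τ : Fin (k+1) → Bool) j) * b i j))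
          = (Real.exp L + Real.exp (-L)) * Real.exp Q := h1
        _ ≤ 2 * Real.exp (L ^ 2 / 2) * Real.exp Q := h2
        _ = 2 * Real.exp (L ^ 2 / 2 + Q) := by rw [Real.exp_add]; ring
        _ = 2 * Real.exp (2⁻¹ * y +
            ∑ i, ∑ j ∈ Finset.Ioi i, sg (τ i) * sg (τ j) * b' i j) := by rw [hQR]
    -- assemble
    rw [hre]
    calc (∑ τ : Fin k → Bool, ∑ s : Bool, Real.exp (∑ i, ∑ j ∈ Finset.Ioi i,
            sg ((Fin.cons s τ : Fin (k+1) → Bool) i) * sg ((Fin.cons s τ : Fin (k+1) → Bool) j) * b i j))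
        ≤ ∑ τ : Fin k → Bool, 2 * Real.exp (2⁻¹ * y +
            ∑ i, ∑ j ∈ Finset.Ioi i, sg (τ i) * sg (τ j) * b' i j) :=
          Finset.sum_le_sum fun τ _ => hptb τ
      _ = 2 * Real.exp (2⁻¹ * y) * ∑ τ : Fin k → Bool,
            Real.exp (∑ i, ∑ j ∈ Finset.Ioi i, sg (τ i) * sg (τ j) * b' i j) := by
          rw [Finset.mul_sum Finset.univ
            (fun τ : Fin k → Bool => Real.exp (∑ i, ∑ j ∈ Finset.Ioi i,
              sg (τ i) * sg (τ j) * b' i j)) (2 * Real.exp (2⁻¹ * y))]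
          exact Finset.sum_congr rfl fun τ _ => by rw [Real.exp_add]; ring
      _ ≤ 2 * Real.exp (2⁻¹ * y) * (2 ^ k * Real.exp (2⁻¹ * ∑ i, ∑ j, b' i j ^ 2)) := by
          refine mul_le_mul_of_nonneg_left hIH (by positivity)
      _ ≤ 2 ^ (k+1) * Real.exp (2⁻¹ * ∑ i, ∑ j, b i j ^ 2) := by
          rw [hF]
          have : Real.exp (2⁻¹ * y) * Real.exp (2⁻¹ * ∑ i, ∑ j, b' i j ^ 2)
              = Real.exp (2⁻¹ * y + 2⁻¹ * ∑ i, ∑ j, b' i j ^ 2) := (Real.exp_add _ _).symm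
          have hle : 2⁻¹ * y + 2⁻¹ * (∑ i, ∑ j, b' i j ^ 2) ≤ 2⁻¹ * (x2 + 2 * y) := by
            linarith
          calc 2 * Real.exp (2⁻¹ * y) * (2 ^ k * Real.exp (2⁻¹ * ∑ i, ∑ j, b' i j ^ 2))
              = 2 ^ (k+1) * (Real.exp (2⁻¹ * y) * Real.exp (2⁻¹ * ∑ i, ∑ j, b' i j ^ 2)) := by
                ring
            _ = 2 ^ (k+1) * Real.exp (2⁻¹ * y + 2⁻¹ * ∑ i, ∑ j, b' i j ^ 2) := by rw [this]
            _ ≤ 2 ^ (k+1) * Real.exp (2⁻¹ * (x2 + 2 * y)) := by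
                have := Real.exp_le_exp.mpr hle
                exact mul_le_mul_of_nonneg_left this (by positivity)

theorem stmt_11 {n d : ℕ} {Ω : Type*} [MeasureSpace Ω]
    [IsProbabilityMeasure (ℙ : Measure Ω)]
    (x : Fin n → EuclideanSpace ℝ (Fin d)) (c : ℝ) (hx : ∀ i, ‖x i‖ ≤ c)
    (ε : Fin n → Ω → ℝ) (hmeas : ∀ i, Measurable (ε i))
    (hindep : iIndepFun ε ℙ)
    (hlaw : ∀ i, Measure.map (ε i) ℙ =
      (1 / 2 : ENNReal) • Measure.dirac (1 : ℝ) +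
        (1 / 2 : ENNReal) • Measure.dirac (-1 : ℝ))
    (lam : ℝ) (hlam : 0 < lam)
    (hsmall : 8 * Real.exp 1 * lam *
      Real.sqrt (∑ i, ∑ j ∈ Finset.Ioi i, (inner ℝ (x i) (x j) : ℝ) ^ 2) ≤ 1) :
    ∫ ω, Real.exp (lam * ‖∑ i, ε i ω • x i‖ ^ 2) ∂ℙ ≤
      2 * Real.exp (lam * ∑ i, ‖x i‖ ^ 2) := by
  classical
  set s2 : ℝ := ∑ i, ∑ j ∈ Finset.Ioi i, (inner ℝ (x i) (x j) : ℝ) ^ 2 with hs2def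
  have hs2 : 0 ≤ s2 :=
    Finset.sum_nonneg fun i _ => Finset.sum_nonneg fun j _ => sq_nonneg _
  have he : (2.7182818283 : ℝ) < Real.exp 1 := Real.exp_one_gt_d9
  have hsqrt0 : 0 ≤ Real.sqrt s2 := Real.sqrt_nonneg s2
  have hls0 : 0 ≤ lam * Real.sqrt s2 := mul_nonneg hlam.le hsqrt0
  have h21 : lam * Real.sqrt s2 ≤ 1 / 21 := by nlinarith
  have hsq : lam ^ 2 * s2 ≤ 1 / 441 := by
    have h := Real.sq_sqrt hs2
    nlinarith
  -- the chaos matrix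
  set b : Fin n → Fin n → ℝ :=
    fun i j => if i = j then 0 else 2 * lam * (inner ℝ (x i) (x j) : ℝ) with hbdef
  have hbsym : ∀ i j, b i j = b j i := by
    intro i j
    by_cases h : i = j
    · rw [h]
    · simp only [hbdef, if_neg h, if_neg (Ne.symm h), real_inner_comm]
  have hbd : ∀ i, b i i = 0 := fun i => by simp [hbdef]
  have hbsum : ∑ i, ∑ j, b i j ^ 2 = 8 * lam ^ 2 * s2 := by
    rw [sum_split' (fun i j => b i j ^ 2)]
    have hdiag : ∑ i, b i i ^ 2 = 0 :=
      Finset.sum_eq_zero fun i _ => by rw [hbd i]; ring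
    rw [hdiag, zero_add, hs2def, Finset.mul_sum]
    refine Finset.sum_congr rfl fun i _ => ?_
    rw [Finset.mul_sum]
    refine Finset.sum_congr rfl fun j hj => ?_
    have hij : i ≠ j := ne_of_lt (Finset.mem_Ioi.mp hj)
    rw [hbsym j i]
    simp only [hbdef, if_neg hij]
    ring
  have hbsmall : ∑ i, ∑ j, b i j ^ 2 ≤ 4 / 25 := by
    rw [hbsum]; nlinarith
  -- integral reduction
  have hlaw' : ∀ i, Measure.map (ε i) ℙ = rad := fun i => (hlaw i).trans rfl
  set F : (Fin n → ℝ) → ℝ := fun y => Real.exp (lam * ‖∑ i, y i • x i‖ ^ 2) with hFdef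
  have hc1 : Continuous fun y : Fin n → ℝ => ∑ i, y i • x i :=
    continuous_finset_sum _ fun i _ => (continuous_apply i).smul continuous_const
  have hFc : Continuous F := Real.continuous_exp.comp (continuous_const.mul (hc1.norm.pow 2))
  have hIE : ∫ ω, Real.exp (lam * ‖∑ i, ε i ω • x i‖ ^ 2) ∂ℙ
      = ∑ σ : Fin n → Bool, ((2:ℝ) ^ n)⁻¹ * F (fun i => sg (σ i)) :=
    integral_eq_sum ε hmeas hindep hlaw' F hFc
  -- rewrite each term
  have hterm : ∀ σ : Fin n → Bool, F (fun i => sg (σ i))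
      = Real.exp (lam * ∑ i, ‖x i‖ ^ 2)
        * Real.exp (∑ i, ∑ j ∈ Finset.Ioi i, sg (σ i) * sg (σ j) * b i j) := by
    intro σ
    rw [hFdef]
    simp only
    rw [norm_expand x (fun i => sg (σ i)) (fun i => sg_sq' (σ i)), mul_add, Real.exp_add]
    congr 2
    rw [Finset.mul_sum]
    refine Finset.sum_congr rfl fun i _ => ?_
    rw [Finset.mul_sum]
    refine Finset.sum_congr rfl fun j hj => ?_
    have hij : i ≠ j := ne_of_lt (Finset.mem_Ioi.mp hj)
    simp only [hbdef, if_neg hij]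
    ring
  rw [hIE]
  have hsum : ∑ σ : Fin n → Bool, ((2:ℝ) ^ n)⁻¹ * F (fun i => sg (σ i))
      = ((2:ℝ) ^ n)⁻¹ * Real.exp (lam * ∑ i, ‖x i‖ ^ 2)
        * ∑ σ : Fin n → Bool,
            Real.exp (∑ i, ∑ j ∈ Finset.Ioi i, sg (σ i) * sg (σ j) * b i j) := by
    rw [Finset.mul_sum Finset.univ
      (fun σ : Fin n → Bool =>
        Real.exp (∑ i, ∑ j ∈ Finset.Ioi i, sg (σ i) * sg (σ j) * b i j))
      (((2:ℝ) ^ n)⁻¹ * Real.exp (lam * ∑ i, ‖x i‖ ^ 2))]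
    refine Finset.sum_congr rfl fun σ _ => ?_
    rw [hterm σ]
    ring
  rw [hsum]
  have hCB := chaos_bound n b hbsym hbd hbsmall
  have hexp2 : Real.exp (2⁻¹ * ∑ i, ∑ j, b i j ^ 2) ≤ 2 := by
    have hlog : (0.6931471803 : ℝ) < Real.log 2 := Real.log_two_gt_d9
    have : 2⁻¹ * ∑ i, ∑ j, b i j ^ 2 ≤ Real.log 2 := by
      rw [hbsum]; nlinarith
    calc Real.exp (2⁻¹ * ∑ i, ∑ j, b i j ^ 2) ≤ Real.exp (Real.log 2) :=
          Real.exp_le_exp.mpr this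
      _ = 2 := Real.exp_log (by norm_num)
  have hpos : (0:ℝ) < ((2:ℝ) ^ n)⁻¹ * Real.exp (lam * ∑ i, ‖x i‖ ^ 2) := by positivity
  calc ((2:ℝ) ^ n)⁻¹ * Real.exp (lam * ∑ i, ‖x i‖ ^ 2)
        * ∑ σ : Fin n → Bool,
            Real.exp (∑ i, ∑ j ∈ Finset.Ioi i, sg (σ i) * sg (σ j) * b i j)
      ≤ ((2:ℝ) ^ n)⁻¹ * Real.exp (lam * ∑ i, ‖x i‖ ^ 2)
          * (2 ^ n * Real.exp (2⁻¹ * ∑ i, ∑ j, b i j ^ 2)) :=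
        mul_le_mul_of_nonneg_left hCB hpos.le
    _ = Real.exp (lam * ∑ i, ‖x i‖ ^ 2) * Real.exp (2⁻¹ * ∑ i, ∑ j, b i j ^ 2) := by
        field_simp
    _ ≤ Real.exp (lam * ∑ i, ‖x i‖ ^ 2) * 2 :=
        mul_le_mul_of_nonneg_left hexp2 (Real.exp_pos _).le
    _ = 2 * Real.exp (lam * ∑ i, ‖x i‖ ^ 2) := by ring
end

section
/- Let $g : [n] \times [n] \to \mathbb{R}$ be a symmetric or asymmetric kernel and $n$ an even positive integer. Then $\frac{1}{n(n-1)}\sum_{i=1}^n \sum_{j \neq i} g(i,j) = \frac{1}{n! \cdot (n/2)} \sum_{s \in S_n} \sum_{i=1}^{n/2} g(s(2i-1), s(2i))$, where $S_n$ is the symmetric group on $[n]$. -/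
open Finset

lemma exists_perm_pair {n : ℕ} (a b i j : Fin n) (hab : a ≠ b) (hij : i ≠ j) :
    ∃ σ : Equiv.Perm (Fin n), σ a = i ∧ σ b = j := by
  refine ⟨(Equiv.swap ((Equiv.swap a i) b) j) * (Equiv.swap a i), ?_, ?_⟩
  · simp only [Equiv.Perm.mul_apply, Equiv.swap_apply_left]
    have hb' : (Equiv.swap a i) b ≠ i := by
      intro h
      apply hab
      apply (Equiv.swap a i).injective
      rw [h, Equiv.swap_apply_left]
    exact Equiv.swap_apply_of_ne_of_ne (Ne.symm hb') hij
  · simp only [Equiv.Perm.mul_apply, Equiv.swap_apply_left]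

lemma fiber_card_eq {n : ℕ} (a b i j a' b' i' j' : Fin n) (hab : a ≠ b) (hij : i ≠ j)
    (hab' : a' ≠ b') (hij' : i' ≠ j') :
    (univ.filter fun s : Equiv.Perm (Fin n) => s a = i ∧ s b = j).card
      = (univ.filter fun s : Equiv.Perm (Fin n) => s a' = i' ∧ s b' = j').card := by
  obtain ⟨σ, hσ1, hσ2⟩ := exists_perm_pair i j i' j' hij hij'
  obtain ⟨τ, hτ1, hτ2⟩ := exists_perm_pair a' b' a b hab' hab
  apply Finset.card_bij' (fun s _ => σ * s * τ) (fun t _ => σ⁻¹ * t * τ⁻¹)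
  · intro s hs
    simp only [mem_filter, mem_univ, true_and, Equiv.Perm.mul_apply] at hs ⊢
    rw [hτ1, hτ2, hs.1, hs.2, hσ1, hσ2]
    exact ⟨rfl, rfl⟩
  · intro t ht
    simp only [mem_filter, mem_univ, true_and, Equiv.Perm.mul_apply] at ht ⊢
    rw [← hτ1, ← hτ2]
    simp only [Equiv.Perm.inv_def, Equiv.symm_apply_apply]
    rw [ht.1, ht.2, ← hσ1, ← hσ2]
    simp
  · intro s _; group
  · intro t _; group

lemma sum_perm_eq {n : ℕ} (a b : Fin n) (hab : a ≠ b)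
    (c : ℕ) (hc : ∀ i j : Fin n, i ≠ j →
      (univ.filter fun s : Equiv.Perm (Fin n) => s a = i ∧ s b = j).card = c)
    (f : Fin n → Fin n → ℝ) :
    ∑ s : Equiv.Perm (Fin n), f (s a) (s b)
      = (c : ℝ) * ∑ p ∈ (univ : Finset (Fin n)).offDiag, f p.1 p.2 := by
  rw [← Finset.sum_fiberwise_of_maps_to' (g := fun s : Equiv.Perm (Fin n) => (s a, s b))
      (t := (univ : Finset (Fin n)).offDiag)
      (fun s _ => Finset.mem_offDiag.2 ⟨mem_univ _, mem_univ _, fun h => hab (s.injective h)⟩)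
      (fun p => f p.1 p.2)]
  rw [Finset.mul_sum]
  refine Finset.sum_congr rfl fun p hp => ?_
  rw [Finset.sum_const, nsmul_eq_mul]
  congr 1
  have hfil : (univ.filter fun s : Equiv.Perm (Fin n) => (s a, s b) = p)
      = univ.filter fun s : Equiv.Perm (Fin n) => s a = p.1 ∧ s b = p.2 := by
    apply Finset.filter_congr
    intro s _
    simp [Prod.ext_iff]
  rw [hfil]
  exact_mod_cast hc p.1 p.2 (Finset.mem_offDiag.1 hp).2.2

lemma offDiag_sum {n : ℕ} (f : Fin n → Fin n → ℝ) :
    ∑ p ∈ (univ : Finset (Fin n)).offDiag, f p.1 p.2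
      = ∑ i, ∑ j ∈ Finset.univ \ {i}, f i j := by
  have h : (univ : Finset (Fin n)).offDiag
      = (univ ×ˢ univ).filter fun p => p.1 ≠ p.2 := by
    ext p; simp [Finset.mem_offDiag]
  rw [h, Finset.sum_filter, Finset.sum_product]
  refine Finset.sum_congr rfl fun i _ => ?_
  rw [← Finset.sum_filter]
  apply Finset.sum_congr _ fun _ _ => rfl
  ext j; simp [eq_comm, ne_comm]

theorem stmt_17 {m : ℕ} (hm : 0 < m) (g : Fin (2 * m) → Fin (2 * m) → ℝ) :
    (1 / ((2 * m : ℝ) * (2 * m - 1))) * ∑ i, ∑ j ∈ Finset.univ \ {i}, g i j =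
      (1 / ((Nat.factorial (2 * m) : ℝ) * m)) *
        ∑ s : Equiv.Perm (Fin (2 * m)), ∑ i : Fin m,
          g (s ⟨2 * (i : ℕ), by have := i.isLt; omega⟩)
            (s ⟨2 * (i : ℕ) + 1, by have := i.isLt; omega⟩) := by
  have hmr : (1:ℝ) ≤ m := by exact_mod_cast hm
  set a : Fin m → Fin (2 * m) := fun i => ⟨2 * (i : ℕ), by have := i.isLt; omega⟩ with ha
  set b : Fin m → Fin (2 * m) := fun i => ⟨2 * (i : ℕ) + 1, by have := i.isLt; omega⟩ with hb
  have hab : ∀ i, a i ≠ b i := by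
    intro i h
    have := congrArg Fin.val h
    simp only [ha, hb] at this
    omega
  set c : ℕ := (univ.filter fun s : Equiv.Perm (Fin (2 * m)) =>
      s (a ⟨0, hm⟩) = a ⟨0, hm⟩ ∧ s (b ⟨0, hm⟩) = b ⟨0, hm⟩).card with hc
  have hcc : ∀ i : Fin m, ∀ p q : Fin (2*m), p ≠ q →
      (univ.filter fun s : Equiv.Perm (Fin (2 * m)) =>
        s (a i) = p ∧ s (b i) = q).card = c := by
    intro i p q hpq
    exact fiber_card_eq _ _ _ _ _ _ _ _ (hab i) hpq (hab _) (hab _)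
  set S : ℝ := ∑ i, ∑ j ∈ Finset.univ \ {i}, g i j with hS
  have hSoff : ∑ p ∈ (univ : Finset (Fin (2 * m))).offDiag, g p.1 p.2 = S :=
    offDiag_sum g
  have hRHS : ∑ s : Equiv.Perm (Fin (2 * m)), ∑ i : Fin m, g (s (a i)) (s (b i))
      = (m : ℝ) * ((c : ℝ) * S) := by
    rw [Finset.sum_comm]
    have key : ∀ i : Fin m, ∑ s : Equiv.Perm (Fin (2 * m)), g (s (a i)) (s (b i))
        = (c : ℝ) * S := by
      intro i
      rw [sum_perm_eq (a i) (b i) (hab i) c (hcc i) g, hSoff]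
    rw [Finset.sum_congr rfl fun i _ => key i, Finset.sum_const, card_univ,
      Fintype.card_fin, nsmul_eq_mul]
  have hcount : ((2 * m).factorial : ℝ) = (c : ℝ) * ((2*m : ℝ) * (2*m - 1)) := by
    have h1 := sum_perm_eq (a ⟨0, hm⟩) (b ⟨0, hm⟩) (hab _) c (hcc _) (fun _ _ => (1:ℝ))
    simp only [Finset.sum_const, card_univ, nsmul_eq_mul, mul_one] at h1
    rw [Fintype.card_perm, Fintype.card_fin] at h1
    have hcard : ((univ : Finset (Fin (2*m))).offDiag.card : ℝ)
        = (2*m : ℝ) * (2*m - 1) := by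
      rw [Finset.offDiag_card, card_univ, Fintype.card_fin]
      have h2 : 2 * m ≤ 2 * m * (2 * m) := Nat.le_mul_of_pos_left _ (by omega)
      push_cast [Nat.cast_sub h2]
      ring
    rw [hcard] at h1
    exact h1
  rw [hRHS]
  have hne1a : (2*m : ℝ) ≠ 0 := by positivity
  have hne1b : (2*m : ℝ) - 1 ≠ 0 := by nlinarith
  have hne2 : ((2*m).factorial : ℝ) ≠ 0 := by positivity
  have hne3 : (m : ℝ) ≠ 0 := by positivity
  rw [hS] at *
  field_simp
  rw [hcount]
  ring
end
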